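/- Let u be a nonconstant inner function and let φ ∈ L∞(𝕋) be such that the dual truncated Toeplitz operator D_φ on K_u^⊥ is normal and the essential range ess ran(φ) is a convex subset of ℂ. Then m(D_φ) = ess inf_{ζ ∈ 𝕋} |φ(ζ)|. -/

import Mathlib

/-! For a unit vector `f ∈ K_u^⊥`, `⟨f, D_φ f⟩ = ⟨f, φ f⟩ = ∫ φ |f|²` is the mean of `φ` for the
probability density `|f|²`, so it lies in the closed convex set `ess ran φ`, all of whose points
have modulus at least `ess inf |φ|`; hence `‖D_φ f‖ ≥ |⟨f, D_φ f⟩| ≥ ess inf |φ|`.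

Conversely, let `g` be the indicator of `{|φ| < ess inf |φ| + ε}`. As `m → -∞`, the Hardy
projection of `e_m g` tends to `0`, so `e_m g` is nearly in `H²₋ ⊆ K_u^⊥`; correcting it by that
projection gives vectors of `K_u^⊥` on which `‖D_φ f‖ / ‖f‖` tends to at most
`‖φ g‖ / ‖g‖ ≤ ess inf |φ| + ε`. -/

open MeasureTheory Complex
open scoped InnerProductSpace ENNReal

noncomputable section

namespace DTTO

instance fact2pi : Fact (0 < 2 * Real.pi) := ⟨by positivity⟩

/-- The circle, realized as `ℝ / 2πℤ`. -/
abbrev 𝕋c := AddCircle (2 * Real.pi)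

/-- Normalized Haar (Lebesgue) measure on the circle. -/
abbrev μT : Measure 𝕋c := AddCircle.haarAddCircle

/-- `L²(𝕋)`. -/
abbrev L2 := Lp ℂ 2 μT

/-- `L∞(𝕋)`. -/
abbrev Linf := Lp ℂ ⊤ μT

lemma memL2_smul (φ : Linf) (f : L2) : MemLp (⇑φ • ⇑f) 2 μT :=
  (Lp.memLp f).smul (Lp.memLp φ)

/-- Multiplication operator `M_φ : L² → L²` by a function `φ ∈ L∞`. -/
def Mmul (φ : Linf) : L2 →L[ℂ] L2 :=
  LinearMap.mkContinuous
    { toFun := fun f => (memL2_smul φ f).toLp _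
      map_add' := fun f g => by
        refine Lp.ext ?_
        filter_upwards [MemLp.coeFn_toLp (memL2_smul φ (f + g)),
          MemLp.coeFn_toLp (memL2_smul φ f), MemLp.coeFn_toLp (memL2_smul φ g),
          Lp.coeFn_add f g,
          Lp.coeFn_add ((memL2_smul φ f).toLp _) ((memL2_smul φ g).toLp _)] with
            x h1 h2 h3 h4 h5
        rw [h1, h5]
        simp only [Pi.add_apply, h2, h3]
        simp only [Pi.smul_apply', h4, Pi.add_apply, smul_add]
      map_smul' := fun c f => by
        refine Lp.ext ?_
        filter_upwards [MemLp.coeFn_toLp (memL2_smul φ (c • f)),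
          MemLp.coeFn_toLp (memL2_smul φ f),
          Lp.coeFn_smul c f,
          Lp.coeFn_smul c ((memL2_smul φ f).toLp _)] with x h1 h2 h3 h4
        rw [h1, RingHom.id_apply, h4]
        simp only [Pi.smul_apply, Pi.smul_apply', h2, h3]
        exact smul_comm _ _ _ }
    ‖φ‖ (fun f => by
      simp only [LinearMap.coe_mk, AddHom.coe_mk]
      rw [Lp.norm_toLp, Lp.norm_def, Lp.norm_def]
      rw [← ENNReal.toReal_mul]
      refine ENNReal.toReal_mono ?_ ?_
      · exact ENNReal.mul_ne_top (Lp.eLpNorm_ne_top φ) (Lp.eLpNorm_ne_top f)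
      · exact eLpNorm_smul_le_eLpNorm_top_mul_eLpNorm 2 (Lp.aestronglyMeasurable f) ⇑φ)

/-- The canonical inclusion `L∞ ⊆ L²` (the measure is finite). -/
def toL2 (φ : Linf) : L2 := ((Lp.memLp φ).mono_exponent le_top).toLp _

/-- The Hardy space `H²`, the closed linear span in `L²` of the exponentials `e_n`, `n ≥ 0`. -/
def H2 : Submodule ℂ L2 :=
  (Submodule.span ℂ (Set.range fun n : ℕ => (fourierLp 2 (n : ℤ) : L2))).topologicalClosure

instance : CompleteSpace H2 := (Submodule.isClosed_topologicalClosure _).completeSpace_coe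

/-- `H²₋ = L² ⊖ H²`. -/
def Hminus : Submodule ℂ L2 := H2ᗮ

instance : CompleteSpace Hminus := (Submodule.isClosed_orthogonal _).completeSpace_coe

/-- `H∞ = H² ∩ L∞`. -/
def MemHinf (φ : Linf) : Prop := toL2 φ ∈ H2

/-- An inner function: an element of `H² ∩ L∞` of modulus one a.e. -/
structure IsInnerFn (u : Linf) : Prop where
  memH2 : MemHinf u
  unimod : ∀ᵐ z ∂μT, ‖u z‖ = 1

/-- `u` is nonconstant (not a.e. equal to a constant). -/
def Nonconst (u : Linf) : Prop := ¬ ∃ c : ℂ, (⇑u : 𝕋c → ℂ) =ᵐ[μT] fun _ => c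

/-- The subspace `uH²` of `L²`. -/
def uH2 (u : Linf) : Submodule ℂ L2 := H2.map (Mmul u).toLinearMap

/-- The model space `K_u = H² ⊖ uH² = H² ∩ (uH²)ᗮ`. -/
def Ku (u : Linf) : Submodule ℂ L2 := H2 ⊓ (uH2 u)ᗮ

lemma isClosed_Ku (u : Linf) : IsClosed ((Ku u : Set L2)) := by
  have h : (Ku u : Set L2) = (H2 : Set L2) ∩ ((uH2 u)ᗮ : Set L2) := rfl
  rw [h]
  exact (Submodule.isClosed_topologicalClosure _).inter (Submodule.isClosed_orthogonal _)

instance (u : Linf) : CompleteSpace (Ku u) := (isClosed_Ku u).completeSpace_coe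

/-- `K_u^⊥ = L² ⊖ K_u`. -/
def KuP (u : Linf) : Submodule ℂ L2 := (Ku u)ᗮ

instance (u : Linf) : CompleteSpace (KuP u) := (Submodule.isClosed_orthogonal _).completeSpace_coe

/-- Dual truncated Toeplitz operator `D_φ` on `K_u^⊥`. -/
def Dop (u φ : Linf) : KuP u →L[ℂ] KuP u :=
  Submodule.orthogonalProjectionOnto (KuP u) ∘L Mmul φ ∘L (KuP u).subtypeL

/-- Truncated Toeplitz operator `A_φ` on `K_u`. -/
def Aop (u φ : Linf) : Ku u →L[ℂ] Ku u :=
  Submodule.orthogonalProjectionOnto (Ku u) ∘L Mmul φ ∘L (Ku u).subtypeL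

/-- The operator `B_φ : K_u → K_u^⊥`, `B_φ f = (I - P_{K_u})(φ f)`. -/
def Bop (u φ : Linf) : Ku u →L[ℂ] KuP u :=
  Submodule.orthogonalProjectionOnto (KuP u) ∘L Mmul φ ∘L (Ku u).subtypeL

/-- Toeplitz operator `T_φ : H² → H²`. -/
def Top (φ : Linf) : H2 →L[ℂ] H2 :=
  Submodule.orthogonalProjectionOnto H2 ∘L Mmul φ ∘L H2.subtypeL

/-- Hankel operator `H_φ : H² → H²₋`. -/
def Hop (φ : Linf) : H2 →L[ℂ] Hminus :=
  Submodule.orthogonalProjectionOnto Hminus ∘L Mmul φ ∘L H2.subtypeL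

/-- The exponential `e₁(ζ) = ζ` as an element of `L∞`. -/
def e1 : Linf := fourierLp ⊤ 1

/-- The exponential `e₋₁(ζ) = ζ̄` as an element of `L∞`. -/
def eneg1 : Linf := fourierLp ⊤ (-1)

/-- The operator `Q : H²₋ → H²₋`, `Q g = P₋(e₁ g)`. -/
def Qop : Hminus →L[ℂ] Hminus :=
  Submodule.orthogonalProjectionOnto Hminus ∘L Mmul e1 ∘L Hminus.subtypeL

/-- `u(0)`, the 0-th Fourier coefficient. -/
def coef0 (u : Linf) : ℂ := fourierCoeff (⇑u) 0

/-- Minimum modulus of a bounded operator. -/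
def minMod {E F : Type*} [NormedAddCommGroup E] [NormedSpace ℂ E]
    [NormedAddCommGroup F] [NormedSpace ℂ F] (T : E →L[ℂ] F) : ℝ :=
  ⨅ x : {x : E // ‖x‖ = 1}, ‖T x.1‖

/-- Complex conjugation on `L∞`. -/
lemma memLinf_star (φ : Linf) : MemLp (fun z => (starRingEnd ℂ) (φ z)) ⊤ μT := by
  refine ⟨continuous_star.comp_aestronglyMeasurable (Lp.aestronglyMeasurable φ), ?_⟩
  rw [eLpNorm_congr_norm_ae (g := ⇑φ) (Filter.Eventually.of_forall fun z => norm_star _)]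
  exact Lp.eLpNorm_lt_top φ

/-- The complex conjugate `φ̄ ∈ L∞` of `φ ∈ L∞`. -/
def conjL (φ : Linf) : Linf := (memLinf_star φ).toLp _

lemma memLinf_mul (φ ψ : Linf) : MemLp (⇑φ • ⇑ψ) ⊤ μT :=
  (Lp.memLp ψ).smul (Lp.memLp φ)

/-- The pointwise product of two elements of `L∞`. -/
def mulL (φ ψ : Linf) : Linf := (memLinf_mul φ ψ).toLp _

end DTTO

namespace DTTO

lemma inner_fourierLp_eq_zero {m n : ℤ} (h : m ≠ n) :
    (inner ℂ (fourierLp 2 m : L2) (fourierLp 2 n : L2) : ℂ) = 0 := by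
  have hcoe := congrFun (coe_fourierBasis (T := 2 * Real.pi))
  have h2 := (fourierBasis (T := 2 * Real.pi)).orthonormal.2 (i := m) (j := n) h
  simpa only [hcoe] using h2

lemma span_le_orth_em1 :
    Submodule.span ℂ (Set.range fun n : ℕ => (fourierLp 2 (n : ℤ) : L2))
      ≤ (ℂ ∙ (fourierLp 2 (-1) : L2))ᗮ := by
  rw [Submodule.span_le]
  rintro x ⟨n, rfl⟩
  rw [SetLike.mem_coe, Submodule.mem_orthogonal]
  intro w hw
  obtain ⟨c, rfl⟩ := Submodule.mem_span_singleton.1 hw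
  rw [inner_smul_left, inner_fourierLp_eq_zero (by omega : (-1 : ℤ) ≠ (n : ℤ)), mul_zero]

lemma H2_le_orth_em1 : H2 ≤ (ℂ ∙ (fourierLp 2 (-1) : L2))ᗮ :=
  Submodule.topologicalClosure_minimal _ span_le_orth_em1 (Submodule.isClosed_orthogonal _)

/-- `e₋₁ ∈ H²₋`. -/
lemma em1_mem : (fourierLp 2 (-1) : L2) ∈ Hminus := by
  unfold Hminus
  rw [Submodule.mem_orthogonal]
  intro v hv
  have h := H2_le_orth_em1 hv
  rw [Submodule.mem_orthogonal] at h
  exact inner_eq_zero_symm.mp (h _ (Submodule.mem_span_singleton_self _))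

/-- `e₋₁` as an element of `H²₋`. -/
def em1 : Hminus := ⟨(fourierLp 2 (-1) : L2), em1_mem⟩

/-- For `f ∈ K_u`, the function `u f ∈ uH² ⊆ K_u^⊥`. -/
lemma mul_mem_KuP (u : Linf) (f : Ku u) : Mmul u (f : L2) ∈ KuP u := by
  unfold KuP
  rw [Submodule.mem_orthogonal]
  intro v hv
  have hv2 : v ∈ (uH2 u)ᗮ := (Submodule.mem_inf.1 hv).2
  have hm : Mmul u (f : L2) ∈ uH2 u :=
    Submodule.mem_map_of_mem (Submodule.mem_inf.1 f.2).1
  rw [Submodule.mem_orthogonal] at hv2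
  exact inner_eq_zero_symm.mp (hv2 _ hm)

lemma Ku_le_H2 (u : Linf) : Ku u ≤ H2 := inf_le_left

/-- The inclusion `K_u ⊆ H²` as a continuous linear map. -/
def KuIncl (u : Linf) : Ku u →L[ℂ] H2 :=
  LinearMap.mkContinuous (Submodule.inclusion (Ku_le_H2 u)) 1
    (fun f => by rw [one_mul]; exact le_of_eq rfl)

end DTTO

namespace DTTO

/-- The essential range of `φ ∈ L∞`. -/
def essRan (φ : Linf) : Set ℂ :=
  {w : ℂ | ∀ ε > (0 : ℝ), 0 < μT {z : 𝕋c | ‖φ z - w‖ < ε}}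

/-- The essential infimum of `|φ|`. -/
def essInfAbs (φ : Linf) : ℝ := essInf (fun z => ‖φ z‖) μT

open Filter Topology

lemma _root_.MeasureTheory.Lp.lintegral_enorm_sq {α E : Type*} {m : MeasurableSpace α}
    {μ : Measure α} [NormedAddCommGroup E] (f : Lp E 2 μ) :
    ∫⁻ z, ‖f z‖ₑ ^ 2 ∂μ = ‖f‖ₑ ^ 2 := by
  rw [Lp.enorm_def, eLpNorm_eq_eLpNorm' two_ne_zero ENNReal.ofNat_ne_top, ENNReal.toReal_ofNat,
    ← ENNReal.rpow_two, ← lintegral_rpow_enorm_eq_rpow_eLpNorm' two_pos]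
  simp

lemma _root_.MeasureTheory.Lp.ae_norm_le_norm {α E : Type*} {m : MeasurableSpace α}
    {μ : Measure α} [NormedAddCommGroup E] (f : Lp E ∞ μ) : ∀ᵐ z ∂μ, ‖f z‖ ≤ ‖f‖ := by
  simpa only [Lp.norm_def, ← toReal_eLpNorm (Lp.aestronglyMeasurable f)]
    using ae_le_lpNorm_exponent_top (Lp.memLp f)

lemma essRan_eq_support_map (φ : Linf) : essRan φ = (μT.map φ).support := by
  ext w
  rw [Metric.nhds_basis_ball.mem_measureSupport]
  refine forall₂_congr fun ε _ => ?_
  rw [Measure.map_apply (Lp.stronglyMeasurable φ).measurable measurableSet_ball]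
  simp only [Set.preimage, Metric.mem_ball, dist_eq_norm]

lemma isClosed_essRan (φ : Linf) : IsClosed (essRan φ) :=
  essRan_eq_support_map φ ▸ Measure.isClosed_support

lemma ae_mem_essRan (φ : Linf) : ∀ᵐ z ∂μT, φ z ∈ essRan φ :=
  essRan_eq_support_map φ ▸
    ae_of_ae_map (Lp.aestronglyMeasurable φ).aemeasurable Measure.support_mem_ae

lemma essInfAbs_le_norm_of_mem_essRan {φ : Linf} {w : ℂ} (hw : w ∈ essRan φ) :
    essInfAbs φ ≤ ‖w‖ := by
  by_contra! h
  refine (hw _ (sub_pos.2 h)).ne' (measure_mono_null (fun z hz => ?_)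
    (meas_lt_essInf (isBoundedUnder_of ⟨0, fun z => norm_nonneg (φ z)⟩)))
  have hz : ‖φ z - w‖ < essInfAbs φ - ‖w‖ := hz
  show ‖φ z‖ < essInfAbs φ
  linarith [norm_le_norm_add_norm_sub' (φ z) w]

lemma measure_norm_lt_essInfAbs_add_pos (φ : Linf) {ε : ℝ} (hε : 0 < ε) :
    0 < μT {z | ‖φ z‖ < essInfAbs φ + ε} := by
  refine pos_iff_ne_zero.2 fun h => ?_
  have hle : essInfAbs φ + ε ≤ essInfAbs φ :=
    le_essInf_of_ae_le _ (ae_iff.2 (by simpa only [not_le] using h))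
      (isCoboundedUnder_ge_of_eventually_le _ (Lp.ae_norm_le_norm φ))
  linarith

lemma coeFn_Mmul (φ : Linf) (f : L2) : ⇑(Mmul φ f) =ᵐ[μT] ⇑φ • ⇑f :=
  MemLp.coeFn_toLp (memL2_smul φ f)

lemma norm_Mmul_le (φ : Linf) (f : L2) : ‖Mmul φ f‖ ≤ ‖φ‖ * ‖f‖ :=
  (Mmul φ).le_of_opNorm_le (LinearMap.mkContinuous_norm_le _ (norm_nonneg φ) _) f

lemma Mmul_comm (φ ψ : Linf) (f : L2) : Mmul φ (Mmul ψ f) = Mmul ψ (Mmul φ f) := by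
  refine Lp.ext ?_
  filter_upwards [coeFn_Mmul φ (Mmul ψ f), coeFn_Mmul ψ f, coeFn_Mmul ψ (Mmul φ f),
    coeFn_Mmul φ f] with z h₁ h₂ h₃ h₄
  simp only [h₁, h₂, h₃, h₄, Pi.smul_apply', smul_eq_mul]
  ring

lemma Mmul_fourierLp (m j : ℤ) :
    Mmul (fourierLp ⊤ m) (fourierLp 2 j) = (fourierLp 2 (m + j) : L2) := by
  refine Lp.ext ?_
  filter_upwards [coeFn_Mmul (fourierLp ⊤ m) (fourierLp 2 j), coeFn_fourierLp ⊤ m,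
    coeFn_fourierLp 2 j, coeFn_fourierLp 2 (m + j)] with z h₁ h₂ h₃ h₄
  rw [h₁, h₄, Pi.smul_apply', h₂, h₃, smul_eq_mul, ← fourier_add]

lemma norm_Mmul_fourierLp (m : ℤ) (f : L2) : ‖Mmul (fourierLp ⊤ m) f‖ = ‖f‖ := by
  rw [Lp.norm_def, Lp.norm_def]
  congr 1
  refine eLpNorm_congr_norm_ae ?_
  filter_upwards [coeFn_Mmul (fourierLp ⊤ m) f, coeFn_fourierLp ⊤ m] with z h₁ h₂
  rw [h₁, Pi.smul_apply', h₂, smul_eq_mul, norm_mul, show ‖fourier m z‖ = 1 from Circle.norm_coe _,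
    one_mul]

lemma inner_Mmul_mem_of_ae_mem {φ : Linf} {s : Set ℂ} (hs : Convex ℝ s) (hsc : IsClosed s)
    (hφ : ∀ᵐ z ∂μT, φ z ∈ s) {f : L2} (hf : ‖f‖ = 1) : ⟪f, Mmul φ f⟫_ℂ ∈ s := by
  set ρ : 𝕋c → NNReal := fun z => ‖f z‖₊ ^ 2
  have hρ : Measurable ρ := (Lp.stronglyMeasurable f).measurable.nnnorm.pow_const 2
  set ν := μT.withDensity fun z => ρ z
  have hpt : (fun z => ρ z • φ z) =ᵐ[μT] fun z => ⟪f z, Mmul φ f z⟫_ℂ := by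
    filter_upwards [coeFn_Mmul φ f] with z hz
    rw [hz, Pi.smul_apply', RCLike.inner_apply, smul_eq_mul, mul_assoc, Complex.mul_conj',
      NNReal.smul_def]
    simp [ρ, mul_comm]
  have : IsProbabilityMeasure ν := by
    constructor
    rw [withDensity_apply _ MeasurableSet.univ, Measure.restrict_univ]
    have hf_nnnorm : ‖f‖₊ = 1 := NNReal.eq hf
    simpa [ρ, enorm_eq_nnnorm, hf_nnnorm] using Lp.lintegral_enorm_sq f
  have hint : Integrable φ ν := (integrable_withDensity_iff_integrable_smul hρ).2
    ((L2.integrable_inner f (Mmul φ f)).congr hpt.symm)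
  have hmean : ∫ z, φ z ∂ν ∈ s :=
    hs.integral_mem hsc ((withDensity_absolutelyContinuous _ _).ae_le hφ) hint
  rwa [integral_withDensity_eq_integral_smul hρ, integral_congr_ae hpt, ← L2.inner_def] at hmean

lemma fourierLp_mem_orthogonal_H2 {j : ℤ} (hj : j < 0) : (fourierLp 2 j : L2) ∈ H2ᗮ := by
  have hle : H2 ≤ (ℂ ∙ (fourierLp 2 j : L2))ᗮ := by
    refine Submodule.topologicalClosure_minimal _ (Submodule.span_le.2 ?_)
      (Submodule.isClosed_orthogonal _)
    rintro _ ⟨n, rfl⟩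
    exact Submodule.mem_orthogonal_singleton_iff_inner_left.2
      (inner_fourierLp_eq_zero (by omega))
  exact Submodule.orthogonal_le hle
    (Submodule.le_orthogonal_orthogonal _ (Submodule.mem_span_singleton_self _))

lemma eventually_Mmul_fourierLp_mem_orthogonal_H2 {t : L2}
    (ht : t ∈ Submodule.span ℂ (Set.range (fourierLp (T := 2 * Real.pi) 2))) :
    ∀ᶠ m in atBot, Mmul (fourierLp ⊤ m) t ∈ H2ᗮ := by
  induction ht using Submodule.span_induction with
  | mem _ hx =>
    obtain ⟨j, rfl⟩ := hx
    filter_upwards [eventually_lt_atBot (-j)] with m hm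
    rw [Mmul_fourierLp]
    exact fourierLp_mem_orthogonal_H2 (by omega)
  | zero => exact Eventually.of_forall fun m => by rw [map_zero]; exact zero_mem _
  | add x y _ _ hx hy =>
    filter_upwards [hx, hy] with m hxm hym
    rw [map_add]
    exact add_mem hxm hym
  | smul a x _ hx =>
    filter_upwards [hx] with m hm
    rw [map_smul]
    exact Submodule.smul_mem _ a hm

lemma tendsto_starProjection_H2_Mmul_fourierLp (g : L2) :
    Tendsto (fun m : ℤ => H2.starProjection (Mmul (fourierLp ⊤ m) g)) atBot (𝓝 0) := by
  rw [Metric.tendsto_nhds]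
  intro ε hε
  have hdense : Dense (Submodule.span ℂ (Set.range (fourierLp (T := 2 * Real.pi) 2)) : Set L2) :=
    Submodule.dense_iff_topologicalClosure_eq_top.2 (span_fourierLp_closure_eq_top (by norm_num))
  obtain ⟨t, ht, hgt⟩ := hdense.exists_dist_lt g hε
  filter_upwards [eventually_Mmul_fourierLp_mem_orthogonal_H2 ht] with m hm
  have hshift : H2.starProjection (Mmul (fourierLp ⊤ m) g)
      = H2.starProjection (Mmul (fourierLp ⊤ m) (g - t)) := by
    rw [map_sub, map_sub, (H2.starProjection_apply_eq_zero_iff).2 hm, sub_zero]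
  calc dist (H2.starProjection (Mmul (fourierLp ⊤ m) g)) 0
      = ‖H2.starProjection (Mmul (fourierLp ⊤ m) (g - t))‖ := by rw [dist_zero_right, hshift]
    _ ≤ ‖Mmul (fourierLp ⊤ m) (g - t)‖ := H2.norm_starProjection_apply_le _
    _ < ε := by rwa [norm_Mmul_fourierLp, ← dist_eq_norm]

section MinimumModulus

variable {E F : Type*} [NormedAddCommGroup E] [NormedSpace ℂ E] [NormedAddCommGroup F]
  [NormedSpace ℂ F]

lemma minMod_le_norm_div (T : E →L[ℂ] F) {x : E} (hx : x ≠ 0) : minMod T ≤ ‖T x‖ / ‖x‖ := by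
  refine (ciInf_le ⟨0, ?_⟩ ⟨(‖x‖⁻¹ : ℂ) • x, norm_smul_inv_norm hx⟩).trans_eq ?_
  · rintro _ ⟨y, rfl⟩
    exact norm_nonneg _
  · simp [norm_smul, div_eq_inv_mul]

lemma le_minMod [Nontrivial E] {T : E →L[ℂ] F} {c : ℝ} (h : ∀ x, ‖x‖ = 1 → c ≤ ‖T x‖) :
    c ≤ minMod T := by
  obtain ⟨x, hx⟩ := exists_norm_eq E zero_le_one
  have : Nonempty {x : E // ‖x‖ = 1} := ⟨⟨x, hx⟩⟩
  exact le_ciInf fun x => h x.1 x.2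

end MinimumModulus

lemma Hminus_le_KuP (u : Linf) : Hminus ≤ KuP u := Submodule.orthogonal_le (Ku_le_H2 u)

instance (u : Linf) : Nontrivial (KuP u) :=
  ⟨⟨⟨_, Hminus_le_KuP u em1_mem⟩, 0, fun h =>
    orthonormal_fourier.ne_zero (-1) (congrArg Subtype.val h)⟩⟩

lemma norm_Dop_le (u φ : Linf) (x : KuP u) : ‖Dop u φ x‖ ≤ ‖Mmul φ x‖ :=
  (KuP u).norm_orthogonalProjectionOnto_apply_le _

lemma inner_Dop_self (u φ : Linf) (x : KuP u) : ⟪x, Dop u φ x⟫_ℂ = ⟪(x : L2), Mmul φ x⟫_ℂ :=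
  Submodule.inner_orthogonalProjectionOnto_eq_of_mem_left x _

lemma essInfAbs_le_norm_Dop {u φ : Linf} (hconv : Convex ℝ (essRan φ)) {x : KuP u}
    (hx : ‖x‖ = 1) : essInfAbs φ ≤ ‖Dop u φ x‖ :=
  calc essInfAbs φ ≤ ‖⟪(x : L2), Mmul φ x⟫_ℂ‖ := essInfAbs_le_norm_of_mem_essRan
        (inner_Mmul_mem_of_ae_mem hconv (isClosed_essRan φ) (ae_mem_essRan φ) hx)
    _ = ‖⟪x, Dop u φ x⟫_ℂ‖ := by rw [inner_Dop_self]
    _ ≤ ‖Dop u φ x‖ := by simpa [hx] using norm_inner_le_norm (𝕜 := ℂ) x (Dop u φ x)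

lemma minMod_Dop_le_norm_Mmul_div (u φ : Linf) {g : L2} (hg : g ≠ 0) :
    minMod (Dop u φ) ≤ ‖Mmul φ g‖ / ‖g‖ := by
  set p : ℤ → L2 := fun m => H2.starProjection (Mmul (fourierLp ⊤ m) g)
  have hp : Tendsto (fun m => ‖p m‖) atBot (𝓝 0) := by
    simpa using (tendsto_starProjection_H2_Mmul_fourierLp g).norm
  have hg0 : 0 < ‖g‖ := norm_pos_iff.2 hg
  have hlim : Tendsto (fun m => (‖Mmul φ g‖ + ‖φ‖ * ‖p m‖) / (‖g‖ - ‖p m‖)) atBot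
      (𝓝 (‖Mmul φ g‖ / ‖g‖)) := by
    simpa only [mul_zero, add_zero, sub_zero, Pi.div_def] using
      (tendsto_const_nhds.add (tendsto_const_nhds.mul hp)).div (tendsto_const_nhds.sub hp)
        (by simpa only [sub_zero] using hg0.ne')
  refine ge_of_tendsto hlim ?_
  filter_upwards [hp.eventually (gt_mem_nhds hg0)] with m hm
  set x : KuP u := ⟨Mmul (fourierLp ⊤ m) g - p m,
    Hminus_le_KuP u (H2.sub_starProjection_mem_orthogonal _)⟩
  have hx : ‖g‖ - ‖p m‖ ≤ ‖x‖ := by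
    rw [← norm_Mmul_fourierLp m g]
    exact norm_sub_norm_le _ _
  have hφx : ‖Mmul φ x‖ ≤ ‖Mmul φ g‖ + ‖φ‖ * ‖p m‖ := by
    calc ‖Mmul φ x‖ ≤ ‖Mmul φ (Mmul (fourierLp ⊤ m) g)‖ + ‖Mmul φ (p m)‖ := by
          rw [Submodule.coe_mk, map_sub]
          exact norm_sub_le _ _
      _ ≤ ‖Mmul φ g‖ + ‖φ‖ * ‖p m‖ := by
          rw [Mmul_comm, norm_Mmul_fourierLp]
          gcongr
          exact norm_Mmul_le _ _
  have hxpos : 0 < ‖x‖ := by linarith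
  calc minMod (Dop u φ) ≤ ‖Dop u φ x‖ / ‖x‖ := minMod_le_norm_div _ (norm_pos_iff.1 hxpos)
    _ ≤ ‖Mmul φ x‖ / ‖x‖ := by gcongr; exact norm_Dop_le u φ x
    _ ≤ (‖Mmul φ g‖ + ‖φ‖ * ‖p m‖) / (‖g‖ - ‖p m‖) :=
        div_le_div₀ (by positivity) hφx (by linarith) hx

lemma minMod_Dop_le_essInfAbs (u φ : Linf) : minMod (Dop u φ) ≤ essInfAbs φ := by
  refine le_of_forall_pos_le_add fun ε hε => ?_
  set c := essInfAbs φ + ε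
  have hS : MeasurableSet {z | ‖φ z‖ < c} :=
    measurableSet_lt (Lp.stronglyMeasurable φ).measurable.norm measurable_const
  have hμS := measure_norm_lt_essInfAbs_add_pos φ hε
  obtain ⟨g, hgdef⟩ : ∃ g : L2, g = indicatorConstLp 2 hS (measure_ne_top μT _) (1 : ℂ) :=
    ⟨_, rfl⟩
  have hg : g ≠ 0 := by
    rw [← norm_pos_iff, hgdef, norm_indicatorConstLp' two_ne_zero hμS.ne', norm_one, one_mul]
    exact Real.rpow_pos_of_pos (ENNReal.toReal_pos hμS.ne' (measure_ne_top _ _)) _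
  have hφg : ‖Mmul φ g‖ ≤ c * ‖g‖ := by
    refine Lp.norm_le_mul_norm_of_ae_le_mul ?_
    filter_upwards [coeFn_Mmul φ g, hgdef ▸ indicatorConstLp_coeFn] with z hφgz hgz
    rw [hφgz, Pi.smul_apply', norm_smul, hgz]
    by_cases hz : z ∈ {z | ‖φ z‖ < c}
    · rw [Set.indicator_of_mem hz]
      exact mul_le_mul_of_nonneg_right hz.le (norm_nonneg _)
    · simp [Set.indicator_of_notMem hz]
  calc minMod (Dop u φ) ≤ ‖Mmul φ g‖ / ‖g‖ := minMod_Dop_le_norm_Mmul_div u φ hg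
    _ ≤ c := (div_le_iff₀ (norm_pos_iff.2 hg)).2 hφg

theorem minMod_normal_DTTO_of_convex_essRan_general (u φ : Linf) (hconv : Convex ℝ (essRan φ)) :
    minMod (Dop u φ) = essInfAbs φ :=
  le_antisymm (minMod_Dop_le_essInfAbs u φ) (le_minMod fun _ hx => essInfAbs_le_norm_Dop hconv hx)

/-- If `D_φ` is normal and `ess ran φ` is convex, then `m(D_φ) = ess inf |φ|`. -/
theorem minMod_normal_DTTO_of_convex_essRan (u φ : Linf) (hu : IsInnerFn u)
    (hnc : Nonconst u)
    (hnormal : ContinuousLinearMap.adjoint (Dop u φ) ∘L Dop u φ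
        = Dop u φ ∘L ContinuousLinearMap.adjoint (Dop u φ))
    (hconv : Convex ℝ (essRan φ)) :
    minMod (Dop u φ) = essInfAbs φ :=
  minMod_normal_DTTO_of_convex_essRan_general u φ hconv

end DTTO
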